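/- arXiv:2404.02495 — 3 statements merged into one kernel-verified Lean document; each statement's English description precedes it below -/
import Mathlib

section
/- Let P = conv(u_0, u_1, u_2, u_3, u_4) ⊆ ℝ^4 be a full-dimensional lattice simplex with lattice length l(P) ≥ 3 such that no edge of P has lattice length 5. Suppose l_{0j} ∈ {4, 8} for j = 1, 2, 3, and 3 does not divide l_{04}. Let S = {i ∈ {0, 1, 2, 3} : l_{i4} ≠ 3}. Then the 4-dilations P_{i,4} are defined for all i ∈ S (in particular 4 divides l_{ij} for all distinct i, j ∈ {0,1,2,3}, and l_{i4} ≥ 4 for i ∈ S), and P = (⋃_{i∈S} P_{i,4}) ∪ P_{4,3}. -/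
/-!
Write a point of `P` as `∑ w_j u_j` with `w` in the standard simplex. Stretching the edges of
`P_{i,k}` at `u_i` back to those of `P` shows that the point lies in `P_{i,k}` as soon as
`∑_j w_j r_{ij,k} / (l_{ij} - r_{ij,k}) ≤ w_i`. As `4` divides every edge among `u_0, …, u_3`,
for `i ∈ S` this reads `w_4 ρ_i ≤ w_i` with `ρ_i = r_{i4,4} / (l_{i4} - r_{i4,4}) ≤ 3/4`.
If it fails for every `i ∈ S`, then `w_i < (3/4) w_4` for all `i ∈ S`; edges of length `3` cost
nothing in the criterion for `P_{4,3}`, and the others (of length `≥ 4`, `≠ 5`) have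
`r_{4i,3} / (l_{4i} - r_{4i,3}) ≤ 1/3`, so that criterion holds with sum at most
`4 · (1/3) · (3/4) w_4 = w_4`.
-/

open Finset Pointwise

noncomputable section

/-- The real point corresponding to a lattice point. -/
def toR {n : ℕ} (v : Fin n → ℤ) : Fin n → ℝ := fun x => (v x : ℝ)

/-- The lattice simplex (as a subset of `ℝ^n`) with the given lattice vertices. -/
def lsimplex {n m : ℕ} (u : Fin m → Fin n → ℤ) : Set (Fin n → ℝ) :=
  convexHull ℝ (Set.range fun i => toR (u i))

/-- The lattice length `l_{ij}` of the edge `u_i u_j`: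
the gcd of the coordinates of `u_j - u_i`. -/
def latLen {n m : ℕ} (u : Fin m → Fin n → ℤ) (i j : Fin m) : ℕ :=
  Finset.univ.gcd fun x => (u j x - u i x).natAbs

/-- `r_{ij,k}`: the least nonnegative residue of `l_{ij}` modulo `k`. -/
def rmod {n m : ℕ} (u : Fin m → Fin n → ℤ) (i j : Fin m) (k : ℕ) : ℕ :=
  latLen u i j % k

/-- The vertices of the `k`-dilation `P_{i,k}`: the vertex `u_i` together with, for `j ≠ i`,
the points `((l_{ij} - r_{ij,k})/l_{ij})·u_j + (r_{ij,k}/l_{ij})·u_i`. -/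
def dilVert {n m : ℕ} (u : Fin m → Fin n → ℤ) (i : Fin m) (k : ℕ) (j : Fin m) :
    Fin n → ℝ :=
  if j = i then toR (u i)
  else
    ((((latLen u i j : ℝ) - (rmod u i j k : ℝ)) / (latLen u i j : ℝ)) • toR (u j))
      + (((rmod u i j k : ℝ) / (latLen u i j : ℝ)) • toR (u i))

/-- The `k`-dilation `P_{i,k}`. -/
def dil {n m : ℕ} (u : Fin m → Fin n → ℤ) (i : Fin m) (k : ℕ) : Set (Fin n → ℝ) :=
  convexHull ℝ (Set.range (dilVert u i k))

/-- The primitive edge vector `ũ_{ij} = (u_j - u_i)/l_{ij}`. -/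
def primVec {n m : ℕ} (u : Fin m → Fin n → ℤ) (i j : Fin m) : Fin n → ℝ :=
  (latLen u i j : ℝ)⁻¹ • (toR (u j) - toR (u i))

/-- The translated `k`-dilation `P_{i,k,t} = P_{i,k} + Σ_{j ≠ i} t_j ũ_{ij}`. -/
def dilT {n m : ℕ} (u : Fin m → Fin n → ℤ) (i : Fin m) (k : ℕ) (t : Fin m → ℕ) :
    Set (Fin n → ℝ) :=
  (fun y => y + ∑ j ∈ Finset.univ.erase i, (t j : ℝ) • primVec u i j) '' dil u i k

section ConvexHull

variable {ι E : Type*} [Fintype ι] [AddCommGroup E] [Module ℝ E]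

theorem exists_stdSimplex_of_mem_convexHull_range {f : ι → E} {x : E}
    (hx : x ∈ convexHull ℝ (Set.range f)) :
    ∃ w ∈ stdSimplex ℝ ι, ∑ j, w j • f j = x := by
  classical
  have hrange : Set.range f =
      Fintype.linearCombination ℝ f '' Set.range fun i j => if i = j then (1 : ℝ) else 0 := by
    rw [← Set.range_comp]
    congr 1
    ext i
    simp [Fintype.linearCombination_apply, ite_smul]
  rw [hrange, ← LinearMap.image_convexHull, convexHull_basis_eq_stdSimplex] at hx
  obtain ⟨w, hw, rfl⟩ := hx
  exact ⟨w, hw, (Fintype.linearCombination_apply ℝ f w).symm⟩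

theorem add_sum_smul_sub_mem_convexHull_range (f : ι → E) (i : ι) {c : ι → ℝ}
    (hc : ∀ j, 0 ≤ c j) (hsum : ∑ j, c j ≤ 1) :
    f i + ∑ j, c j • (f j - f i) ∈ convexHull ℝ (Set.range f) := by
  classical
  refine mem_convexHull_of_exists_fintype (fun j => c j + if j = i then 1 - ∑ j, c j else 0) f
    (fun j => add_nonneg (hc j) (by split_ifs <;> linarith)) ?_ (Set.mem_range_self ·) ?_
  · simp [sum_add_distrib]
  · simp only [add_smul, ite_smul, zero_smul, sum_add_distrib, sum_ite_eq',
      mem_univ, if_true, smul_sub, sum_sub_distrib, ← sum_smul, sub_smul,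
      one_smul]
    abel

end ConvexHull

section LatticeSimplex

variable {n m : ℕ} (u : Fin m → Fin n → ℤ)

theorem latLen_self (i : Fin m) : latLen u i i = 0 := by
  simp [latLen, Finset.gcd_eq_zero_iff]

theorem latLen_comm (i j : Fin m) : latLen u i j = latLen u j i :=
  gcd_congr rfl fun x _ => by omega

variable {u}

theorem dvd_latLen_iff {i j : Fin m} {k : ℕ} :
    k ∣ latLen u i j ↔ ∀ x, (k : ℤ) ∣ u j x - u i x := by
  simp [latLen, Finset.dvd_gcd_iff, Int.natCast_dvd]

theorem dvd_latLen_of_dvd_of_dvd {a i j : Fin m} {k : ℕ} (hi : k ∣ latLen u a i)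
    (hj : k ∣ latLen u a j) : k ∣ latLen u i j := by
  rw [dvd_latLen_iff] at *
  intro x
  simpa using dvd_sub (hj x) (hi x)

theorem dilVert_sub_of_latLen_pos {i j : Fin m} (k : ℕ) (hl : 0 < latLen u i j) :
    dilVert u i k j - toR (u i) =
      (((latLen u i j : ℝ) - rmod u i j k) / latLen u i j) • (toR (u j) - toR (u i)) := by
  have hij : j ≠ i := by rintro rfl; simp [latLen_self] at hl
  have hl' : (latLen u i j : ℝ) ≠ 0 := by positivity
  have hsum : ((latLen u i j : ℝ) - rmod u i j k) / latLen u i j + rmod u i j k / latLen u i j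
      = 1 := by field_simp; ring
  rw [dilVert, if_neg hij]
  linear_combination (norm := module) hsum • toR (u i)

theorem dil_subset_lsimplex {i : Fin m} (k : ℕ) (hl : ∀ j, j ≠ i → 0 < latLen u i j) :
    dil u i k ⊆ lsimplex u := by
  refine convexHull_min ?_ (convex_convexHull ℝ _)
  rintro _ ⟨j, rfl⟩
  have hu : ∀ j, toR (u j) ∈ lsimplex u := fun j => subset_convexHull ℝ _ ⟨j, rfl⟩
  by_cases hij : j = i
  · simpa [dilVert, hij] using hu i
  have hlij := hl j hij
  have hr : rmod u i j k ≤ latLen u i j := Nat.mod_le _ _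
  rw [← add_sub_cancel (toR (u i)) (dilVert u i k j), dilVert_sub_of_latLen_pos k hlij]
  refine (convex_convexHull ℝ _).add_smul_sub_mem (hu i) (hu j) ⟨?_, ?_⟩
  · have : (rmod u i j k : ℝ) ≤ latLen u i j := by exact_mod_cast hr
    exact div_nonneg (by linarith) (by positivity)
  · rw [div_le_one (by positivity)]
    linarith [(Nat.cast_nonneg (rmod u i j k) : (0 : ℝ) ≤ _)]

end LatticeSimplex

section Shortfall

variable {n m : ℕ} {u : Fin m → Fin n → ℤ}

/-- The edge of `P_{i,k}` from `u_i` towards `u_j` is the fraction `1 / (1 + dilShortfall u i k j)`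
of the edge `u_i u_j` of `P`. -/
def dilShortfall (u : Fin m → Fin n → ℤ) (i : Fin m) (k : ℕ) (j : Fin m) : ℝ :=
  (rmod u i j k : ℝ) / ((latLen u i j : ℝ) - rmod u i j k)

theorem dilShortfall_eq_zero_of_dvd {i j : Fin m} {k : ℕ} (h : k ∣ latLen u i j) :
    dilShortfall u i k j = 0 := by
  simp [dilShortfall, rmod, Nat.mod_eq_zero_of_dvd h]

theorem dilShortfall_self (i : Fin m) (k : ℕ) : dilShortfall u i k i = 0 :=
  dilShortfall_eq_zero_of_dvd (by simp [latLen_self])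

theorem dilShortfall_le_div {i j : Fin m} {k a b : ℕ} (hb : 0 < b)
    (h : (a + b) * rmod u i j k ≤ a * latLen u i j) : dilShortfall u i k j ≤ a / b := by
  have hr : (rmod u i j k : ℝ) ≤ latLen u i j := by exact_mod_cast Nat.mod_le _ _
  have h' : ((a : ℝ) + b) * rmod u i j k ≤ a * latLen u i j := by exact_mod_cast h
  rcases hr.lt_or_eq with hlt | heq
  · rw [dilShortfall, div_le_div_iff₀ (by linarith) (by positivity)]
    linarith
  · simp only [dilShortfall, heq, sub_self, div_zero]
    positivity

theorem dilShortfall_four_le {i j : Fin m} (h4 : 4 ≤ latLen u i j) :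
    dilShortfall u i 4 j ≤ 3 / 4 := by
  have := dilShortfall_le_div (u := u) (i := i) (j := j) (k := 4) (a := 3) (b := 4) (by norm_num)
    (by unfold rmod; omega)
  exact_mod_cast this

theorem dilShortfall_three_le {i j : Fin m} (h4 : 4 ≤ latLen u i j) (h5 : latLen u i j ≠ 5) :
    dilShortfall u i 3 j ≤ 1 / 3 := by
  have := dilShortfall_le_div (u := u) (i := i) (j := j) (k := 3) (a := 1) (b := 3) (by norm_num)
    (by unfold rmod; omega)
  exact_mod_cast this

theorem sum_smul_mem_dil {i : Fin m} {k : ℕ} (hk : 0 < k)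
    (hkl : ∀ j, j ≠ i → k ≤ latLen u i j) {w : Fin m → ℝ} (hw : w ∈ stdSimplex ℝ (Fin m))
    (h : ∑ j, w j * dilShortfall u i k j ≤ w i) :
    ∑ j, w j • toR (u j) ∈ dil u i k := by
  classical
  -- `c i = 0`, as `l_{ii} = 0` and `x / 0 = 0`
  set c : Fin m → ℝ := fun j => w j * (latLen u i j / ((latLen u i j : ℝ) - rmod u i j k))
  have hr : ∀ j, (rmod u i j k : ℝ) ≤ latLen u i j := fun j => by
    exact_mod_cast Nat.mod_le _ _
  have hrlt : ∀ j, j ≠ i → (rmod u i j k : ℝ) < latLen u i j := fun j hj => by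
    exact_mod_cast (Nat.mod_lt _ hk).trans_le (hkl j hj)
  have hvi : dilVert u i k i = toR (u i) := if_pos rfl
  have hvert : ∀ j, c j • (dilVert u i k j - toR (u i)) = w j • (toR (u j) - toR (u i)) := by
    intro j
    by_cases hj : j = i
    · simp [hj, hvi]
    have hl : 0 < latLen u i j := Nat.lt_of_lt_of_le hk (hkl j hj)
    have hsub := sub_pos.2 (hrlt j hj)
    rw [dilVert_sub_of_latLen_pos k hl, smul_smul]
    congr 1
    simp only [c]
    field_simp
  have hc : ∀ j, c j + (if j = i then w i else 0) = w j + w j * dilShortfall u i k j := by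
    intro j
    by_cases hj : j = i
    · simp [c, hj, latLen_self, dilShortfall_self]
    have hsub := sub_pos.2 (hrlt j hj)
    simp only [c, dilShortfall, if_neg hj]
    field_simp
    ring
  have hcsum : ∑ j, c j + w i = 1 + ∑ j, w j * dilShortfall u i k j := by
    have := sum_congr (s₁ := univ) rfl fun j _ => hc j
    simpa [sum_add_distrib, hw.2] using this
  have hpoint : ∑ j, w j • toR (u j) =
      dilVert u i k i + ∑ j, c j • (dilVert u i k j - dilVert u i k i) := by
    simp only [hvi, hvert, smul_sub, sum_sub_distrib, ← sum_smul, hw.2, one_smul,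
      add_sub_cancel]
  rw [hpoint]
  refine add_sum_smul_sub_mem_convexHull_range _ i (fun j => ?_) (by linarith)
  exact mul_nonneg (hw.1 j) (div_nonneg (by linarith [hr j]) (by linarith [hr j]))

theorem sum_smul_mem_dil_of_dvd {i a : Fin m} {k : ℕ} (hk : 0 < k)
    (hkl : ∀ j, j ≠ i → k ≤ latLen u i j) (hdvd : ∀ j, j ≠ a → k ∣ latLen u i j)
    {w : Fin m → ℝ} (hw : w ∈ stdSimplex ℝ (Fin m)) (h : w a * dilShortfall u i k a ≤ w i) :
    ∑ j, w j • toR (u j) ∈ dil u i k := by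
  refine sum_smul_mem_dil hk hkl hw ?_
  rwa [sum_eq_single a (fun j _ hja => by rw [dilShortfall_eq_zero_of_dvd (hdvd j hja),
    mul_zero]) (by simp)]

theorem sum_smul_mem_dil_three {i : Fin m} (hm : m ≤ 5) (hl : ∀ j, j ≠ i → 3 ≤ latLen u i j)
    (h5 : ∀ j, j ≠ i → latLen u i j ≠ 5) {w : Fin m → ℝ} (hw : w ∈ stdSimplex ℝ (Fin m))
    (hwj : ∀ j, j ≠ i → ¬ 3 ∣ latLen u i j → w j ≤ 3 / 4 * w i) :
    ∑ j, w j • toR (u j) ∈ dil u i 3 := by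
  have hterm : ∀ j ∈ univ.erase i, w j * dilShortfall u i 3 j ≤ w i / 4 := by
    intro j hj
    have hji := ne_of_mem_erase hj
    by_cases h3 : 3 ∣ latLen u i j
    · rw [dilShortfall_eq_zero_of_dvd h3, mul_zero]
      linarith [hw.1 i]
    have h4 : 4 ≤ latLen u i j := by have := hl j hji; omega
    calc w j * dilShortfall u i 3 j ≤ w j * (1 / 3) :=
          mul_le_mul_of_nonneg_left (dilShortfall_three_le h4 (h5 j hji)) (hw.1 j)
      _ ≤ w i / 4 := by linarith [hwj j hji h3]
  have hcard : ((univ.erase i).card : ℝ) ≤ 4 := by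
    rw [card_erase_of_mem (mem_univ i), card_univ, Fintype.card_fin]
    exact_mod_cast (by omega : m - 1 ≤ 4)
  refine sum_smul_mem_dil (by norm_num) hl hw ?_
  calc ∑ j, w j * dilShortfall u i 3 j
      = ∑ j ∈ univ.erase i, w j * dilShortfall u i 3 j :=
        (sum_erase _ (by rw [dilShortfall_self, mul_zero])).symm
    _ ≤ (univ.erase i).card * (w i / 4) := by
        simpa using sum_le_card_nsmul _ _ _ hterm
    _ ≤ 4 * (w i / 4) := mul_le_mul_of_nonneg_right hcard (by linarith [hw.1 i])
    _ = w i := by ring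

end Shortfall

section CaseB

variable {n m : ℕ} {u : Fin m → Fin n → ℤ} {a : Fin m}

theorem four_le_latLen (hlen : ∀ i j, i ≠ j → 3 ≤ latLen u i j)
    (hdvd : ∀ i j, i ≠ a → j ≠ a → 4 ∣ latLen u i j) {i j : Fin m} (hi : i ≠ a)
    (hia : latLen u i a ≠ 3) (hji : j ≠ i) : 4 ≤ latLen u i j := by
  have := hlen i j (Ne.symm hji)
  by_cases hja : j = a
  · subst hja; omega
  · have := hdvd i j hi hja; omega

theorem lsimplex_subset_union_dil (hm : m ≤ 5) (hlen : ∀ i j, i ≠ j → 3 ≤ latLen u i j)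
    (h5 : ∀ i j, i ≠ j → latLen u i j ≠ 5) (hdvd : ∀ i j, i ≠ a → j ≠ a → 4 ∣ latLen u i j) :
    lsimplex u ⊆ (⋃ i ∈ {i | i ≠ a ∧ latLen u i a ≠ 3}, dil u i 4) ∪ dil u a 3 := by
  intro x hx
  obtain ⟨w, hw, rfl⟩ := exists_stdSimplex_of_mem_convexHull_range hx
  by_cases hA : ∃ i ∈ {i | i ≠ a ∧ latLen u i a ≠ 3}, w a * dilShortfall u i 4 a ≤ w i
  · obtain ⟨i, hi, hle⟩ := hA
    exact Or.inl (Set.mem_biUnion hi (sum_smul_mem_dil_of_dvd (by norm_num)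
      (fun j => four_le_latLen hlen hdvd hi.1 hi.2) (hdvd i · hi.1) hw hle))
  push Not at hA
  refine Or.inr (sum_smul_mem_dil_three hm (fun j hj => hlen a j (Ne.symm hj))
    (fun j hj => h5 a j (Ne.symm hj)) hw fun j hja h3 => ?_)
  rw [latLen_comm] at h3
  have hj3 : latLen u j a ≠ 3 := fun h => h3 (h ▸ dvd_rfl)
  have hl4 : 4 ≤ latLen u j a := four_le_latLen hlen hdvd hja hj3 (Ne.symm hja)
  calc w j ≤ w a * dilShortfall u j 4 a := (hA j ⟨hja, hj3⟩).le
    _ ≤ w a * (3 / 4) := mul_le_mul_of_nonneg_left (dilShortfall_four_le hl4) (hw.1 a)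
    _ = 3 / 4 * w a := mul_comm _ _

end CaseB

theorem dim4_caseB_general
    (u : Fin 5 → Fin 4 → ℤ)
    (hlen : ∀ i j, i ≠ j → 3 ≤ latLen u i j)
    (h5 : ∀ i j, i ≠ j → latLen u i j ≠ 5)
    (h01 : latLen u 0 1 = 4 ∨ latLen u 0 1 = 8)
    (h02 : latLen u 0 2 = 4 ∨ latLen u 0 2 = 8)
    (h03 : latLen u 0 3 = 4 ∨ latLen u 0 3 = 8)
    (S : Set (Fin 5))
    (hS : S = {i : Fin 5 | i ≠ 4 ∧ latLen u i 4 ≠ 3}) :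
    (∀ i j : Fin 5, i ≠ j → i ≠ 4 → j ≠ 4 → 4 ∣ latLen u i j) ∧
    (∀ i ∈ S, 4 ≤ latLen u i 4) ∧
    (∀ i ∈ S, ∀ j, j ≠ i → 4 ≤ latLen u i j) ∧
    lsimplex u = (⋃ i ∈ S, dil u i 4) ∪ dil u 4 3 := by
  subst hS
  have hdvd0 : ∀ i : Fin 5, i ≠ 4 → 4 ∣ latLen u 0 i := by
    intro i hi
    fin_cases i <;> simp [latLen_self] at hi ⊢ <;> omega
  have hdvd : ∀ i j : Fin 5, i ≠ 4 → j ≠ 4 → 4 ∣ latLen u i j := fun i j hi hj =>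
    dvd_latLen_of_dvd_of_dvd (hdvd0 i hi) (hdvd0 j hj)
  have hpos : ∀ i j : Fin 5, j ≠ i → 0 < latLen u i j := fun i j hji =>
    (hlen i j (Ne.symm hji)).trans_lt' (by norm_num)
  refine ⟨fun i j _ => hdvd i j,
    fun i hi => four_le_latLen hlen hdvd hi.1 hi.2 (Ne.symm hi.1),
    fun i hi _ => four_le_latLen hlen hdvd hi.1 hi.2, ?_⟩
  exact subset_antisymm (lsimplex_subset_union_dil le_rfl hlen h5 hdvd)
    (Set.union_subset (Set.iUnion₂_subset fun i _ => dil_subset_lsimplex 4 (hpos i))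
      (dil_subset_lsimplex 3 (hpos 4)))

/-- Case B: in dimension 4, with `l(P) ≥ 3`, no edge of length 5,
`l_{0j} ∈ {4,8}` for `j = 1,2,3` and `3 ∤ l_{04}`; let `S = {i ∈ {0,1,2,3} : l_{i4} ≠ 3}`.
Then the dilations `P_{i,4}` for `i ∈ S` are defined (in particular `4 ∣ l_{ij}` for all
distinct `i,j ∈ {0,1,2,3}` and `l_{i4} ≥ 4` for `i ∈ S`), and
`P = (⋃_{i∈S} P_{i,4}) ∪ P_{4,3}`. -/
theorem dim4_caseB
    (u : Fin 5 → Fin 4 → ℤ)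
    (hind : AffineIndependent ℝ fun i => toR (u i))
    (hlen : ∀ i j, i ≠ j → 3 ≤ latLen u i j)
    (h5 : ∀ i j, i ≠ j → latLen u i j ≠ 5)
    (h01 : latLen u 0 1 = 4 ∨ latLen u 0 1 = 8)
    (h02 : latLen u 0 2 = 4 ∨ latLen u 0 2 = 8)
    (h03 : latLen u 0 3 = 4 ∨ latLen u 0 3 = 8)
    (h04 : ¬ (3 ∣ latLen u 0 4))
    (S : Set (Fin 5))
    (hS : S = {i : Fin 5 | i ≠ 4 ∧ latLen u i 4 ≠ 3}) :
    (∀ i j : Fin 5, i ≠ j → i ≠ 4 → j ≠ 4 → 4 ∣ latLen u i j) ∧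
    (∀ i ∈ S, 4 ≤ latLen u i 4) ∧
    (∀ i ∈ S, ∀ j, j ≠ i → 4 ≤ latLen u i j) ∧
    lsimplex u = (⋃ i ∈ S, dil u i 4) ∪ dil u 4 3 :=
  dim4_caseB_general u hlen h5 h01 h02 h03 S hS
end
end

section
/- Let P = conv(u_0, u_1, u_2, u_3, u_4) ⊆ ℝ^4 be the lattice simplex with vertices u_0 = (5,0,0,0), u_1 = (0,60,0,0), u_2 = (0,0,0,0), u_3 = (8,24,12,0), u_4 = (33,24,72,60). Then none of the 3-dilations P_{i,3} admits a nontrivial translation inside P: for every 0 ≤ i ≤ 4 and every nonzero tuple t_i = (t_{ij})_{j≠i} of nonnegative integers, the translated dilation P_{i,3,t_i} is not contained in P. -/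
open Finset Pointwise

noncomputable section

/-- The vertices of the simplex of Example 5.1. -/
def uEx : Fin 5 → Fin 4 → ℤ :=
  ![![5, 0, 0, 0], ![0, 60, 0, 0], ![0, 0, 0, 0], ![8, 24, 12, 0], ![33, 24, 72, 60]]

/-! The facet of `P` opposite `u_i` contains every `u_j` with `j ≠ i`, and each primitive edge
vector `ũ_{ij}` points strictly away from `P` across it. If `k ∣ l_{ij}` for some `j ≠ i`, then
`u_j` itself is a vertex of `P_{i,k}`, so every nontrivial translate of `P_{i,k}` leaves `P`. For
this simplex and `k = 3` such a `j` exists for every `i`: `l_{03} = l_{14} = l_{30} = l_{41} = 3`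
and `l_{21} = 60`. -/

lemma latLen_ne_zero_of_ne {n m : ℕ} {u : Fin m → Fin n → ℤ} {i j : Fin m} (h : u i ≠ u j) :
    latLen u i j ≠ 0 := by
  obtain ⟨x, hx⟩ := Function.ne_iff.mp h
  rw [latLen, Ne, Finset.gcd_eq_zero_iff]
  exact fun h0 => hx (sub_eq_zero.mp (Int.natAbs_eq_zero.mp (h0 x (Finset.mem_univ x)))).symm

lemma dilVert_eq_of_dvd {n m : ℕ} {u : Fin m → Fin n → ℤ} {i j : Fin m} {k : ℕ} (hj : j ≠ i)
    (hl : latLen u i j ≠ 0) (hk : k ∣ latLen u i j) : dilVert u i k j = toR (u j) := by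
  have hl' : (latLen u i j : ℝ) ≠ 0 := Nat.cast_ne_zero.mpr hl
  rw [dilVert, if_neg hj, rmod, Nat.mod_eq_zero_of_dvd hk, Nat.cast_zero, sub_zero, div_self hl',
    zero_div, one_smul, zero_smul, add_zero]

lemma lsimplex_subset_preimage_Ici {n m : ℕ} {u : Fin m → Fin n → ℤ} (ℓ : (Fin n → ℝ) →ₗ[ℝ] ℝ)
    {c : ℝ} (h : ∀ s, c ≤ ℓ (toR (u s))) : lsimplex u ⊆ ℓ ⁻¹' Set.Ici c :=
  convexHull_min (Set.range_subset_iff.mpr h) ((convex_Ici c).linear_preimage ℓ)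

theorem not_dilT_subset_lsimplex {n m : ℕ} {u : Fin m → Fin n → ℤ} {i j : Fin m} {k : ℕ}
    {t : Fin m → ℕ} (ℓ : (Fin n → ℝ) →ₗ[ℝ] ℝ) {c : ℝ} (hfacet : ∀ s ≠ i, ℓ (toR (u s)) = c)
    (hi : c < ℓ (toR (u i))) (hj : j ≠ i) (hk : k ∣ latLen u i j) (ht : ∃ s, s ≠ i ∧ t s ≠ 0) :
    ¬ dilT u i k t ⊆ lsimplex u := by
  have hl : ∀ s ≠ i, latLen u i s ≠ 0 := fun s hs =>
    latLen_ne_zero_of_ne fun he => hi.ne' (by rw [he]; exact hfacet s hs)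
  have hP := lsimplex_subset_preimage_Ici ℓ fun s =>
    (eq_or_ne s i).elim (fun he => he ▸ hi.le) fun hs => (hfacet s hs).ge
  set v := ∑ s ∈ Finset.univ.erase i, (t s : ℝ) • primVec u i s
  have hmem : toR (u j) + v ∈ dilT u i k t :=
    ⟨toR (u j), subset_convexHull ℝ _ ⟨j, dilVert_eq_of_dvd hj (hl j hj) hk⟩, rfl⟩
  have hterm : ∀ s ≠ i, ℓ ((t s : ℝ) • primVec u i s)
      = (t s : ℝ) * ((latLen u i s : ℝ)⁻¹ * (c - ℓ (toR (u i)))) := by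
    intro s hs
    rw [map_smul, primVec, map_smul, map_sub, hfacet s hs, smul_eq_mul, smul_eq_mul]
  have hv : ℓ v < 0 := by
    rw [map_sum]
    obtain ⟨s, hs, hts⟩ := ht
    refine Finset.sum_neg' (fun r hr => ?_) ⟨s, Finset.mem_erase.mpr ⟨hs, Finset.mem_univ s⟩, ?_⟩
    · rw [hterm r (Finset.ne_of_mem_erase hr)]
      exact mul_nonpos_of_nonneg_of_nonpos (Nat.cast_nonneg _)
        (mul_nonpos_of_nonneg_of_nonpos (by positivity) (by linarith))
    · rw [hterm s hs]
      have : (0 : ℝ) < latLen u i s := Nat.cast_pos.mpr (Nat.pos_of_ne_zero (hl s hs))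
      exact mul_neg_of_pos_of_neg (by positivity)
        (mul_neg_of_pos_of_neg (by positivity) (by linarith))
  intro hsub
  have : c ≤ ℓ (toR (u j) + v) := hP (hsub hmem)
  rw [map_add, hfacet j hj] at this
  linarith

def uExNormal : Fin 5 → Fin 4 → ℝ :=
  ![![12, 0, -8, 3], ![0, 1, -2, 2], ![-12, -1, 5, 0], ![0, 0, 5, -6], ![0, 0, 0, 1]]

def uExLevel : Fin 5 → ℝ := ![0, 0, -60, 0, 0]

lemma uExNormal_dotProduct_eq (i s : Fin 5) (hs : s ≠ i) :
    uExNormal i ⬝ᵥ toR (uEx s) = uExLevel i := by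
  fin_cases i <;> fin_cases s <;> first
    | exact absurd rfl hs
    | norm_num [uExNormal, uExLevel, uEx, toR, dotProduct, Fin.sum_univ_four,
        Matrix.cons_val_two, Matrix.cons_val_three, Matrix.vecHead, Matrix.vecTail]

lemma uExLevel_lt_dotProduct (i : Fin 5) : uExLevel i < uExNormal i ⬝ᵥ toR (uEx i) := by
  fin_cases i <;> norm_num [uExNormal, uExLevel, uEx, toR, dotProduct, Fin.sum_univ_four,
    Matrix.cons_val_two, Matrix.cons_val_three, Matrix.vecHead, Matrix.vecTail]

def uExFixedVertex : Fin 5 → Fin 5 := ![3, 4, 1, 0, 1]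

lemma uExFixedVertex_spec (i : Fin 5) :
    uExFixedVertex i ≠ i ∧ 3 ∣ latLen uEx i (uExFixedVertex i) := by
  fin_cases i <;> decide

/-- for the simplex of Example 5.1, no `P_{i,3}` admits a nontrivial
translation inside `P`: for every `i` and every tuple `t` of nonnegative integers
with `t_j ≠ 0` for some `j ≠ i`, the translated dilation `P_{i,3,t}` is not contained in `P`. -/
theorem example_no_nontrivial_translation :
    ∀ i : Fin 5, ∀ t : Fin 5 → ℕ, (∃ j, j ≠ i ∧ t j ≠ 0) →
      ¬ dilT uEx i 3 t ⊆ lsimplex uEx := fun i _ ht =>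
  not_dilT_subset_lsimplex (dotProductBilin ℝ ℝ (uExNormal i))
    (uExNormal_dotProduct_eq i) (uExLevel_lt_dotProduct i) (uExFixedVertex_spec i).1
    (uExFixedVertex_spec i).2 ht
end
end

section
/- Let P ⊆ ℝ^4 be the lattice simplex with vertices u_0 = (5,0,0,0), u_1 = (0,60,0,0), u_2 = (0,0,0,0), u_3 = (8,24,12,0), u_4 = (33,24,72,60), and define P̃_1 = conv((2,0,0,0), (2,42,3,0), (8,24,12,0), (26,18,54,45), (5,0,0,0)), P̃_2 = conv((2,0,0,0), (2,3,0,0), (11,33,21,12), (20,27,42,33), (5,0,0,0)), P̃_3 = conv((2,0,0,0), (2,3,0,0), (8,24,12,0), (14,33,30,24), (5,0,0,0)). Then for each j = 1, 2, 3, P̃_j ⊆ P and P̃_j is a 3-dilation of a lattice simplex: P̃_j = v_j + 3·Q_j for some lattice vector v_j ∈ ℤ^4 and some lattice simplex Q_j ⊆ ℝ^4. -/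
/-! Every vertex of `P̃ⱼ` is a convex combination of the vertices of `P` with weights in `ℤ/20`,
so `P̃ⱼ ⊆ P`. All vertices of `P̃ⱼ` are congruent to `(2,0,0,0)` modulo `3`, which exhibits
`P̃ⱼ` as `(2,0,0,0) + 3·Qⱼ`, and `Qⱼ` is a simplex because its edge vectors from its first
vertex have nonzero determinant. -/

open Finset Pointwise

noncomputable section

/-- The vertices of the extra 3-dilation `P̃₁` of Example 5.1. -/
def tP1 : Fin 5 → Fin 4 → ℤ :=
  ![![2, 0, 0, 0], ![2, 42, 3, 0], ![8, 24, 12, 0], ![26, 18, 54, 45], ![5, 0, 0, 0]]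

/-- The vertices of the extra 3-dilation `P̃₂` of Example 5.1. -/
def tP2 : Fin 5 → Fin 4 → ℤ :=
  ![![2, 0, 0, 0], ![2, 3, 0, 0], ![11, 33, 21, 12], ![20, 27, 42, 33], ![5, 0, 0, 0]]

/-- The vertices of the extra 3-dilation `P̃₃` of Example 5.1. -/
def tP3 : Fin 5 → Fin 4 → ℤ :=
  ![![2, 0, 0, 0], ![2, 3, 0, 0], ![8, 24, 12, 0], ![14, 33, 30, 24], ![5, 0, 0, 0]]

theorem toR_sum_smul {n m : ℕ} (c : Fin m → ℕ) (U : Fin m → Fin n → ℤ) :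
    toR (∑ j, c j • U j) = ∑ j, (c j : ℝ) • toR (U j) := by
  ext x
  simp [toR, Finset.sum_apply]

theorem lsimplex_subset_of_weights {n m m' : ℕ} {W : Fin m' → Fin n → ℤ}
    {U : Fin m → Fin n → ℤ} (d : ℕ) (C : Fin m' → Fin m → ℕ) (hd : 0 < d)
    (hC : ∀ i, ∑ j, C i j = d) (hW : ∀ i, d • W i = ∑ j, C i j • U j) :
    lsimplex W ⊆ lsimplex U := by
  refine convexHull_min (Set.range_subset_iff.2 fun i => ?_) (convex_convexHull ℝ _)
  have hcm : univ.centerMass (fun j => (C i j : ℝ)) (fun j => toR (U j)) = toR (W i) := by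
    rw [Finset.centerMass, ← toR_sum_smul, ← hW i]
    ext x
    simp only [← Nat.cast_sum, hC i, nsmul_eq_mul, Pi.smul_apply, toR, Pi.mul_apply,
      Pi.natCast_apply, Int.cast_mul, Int.cast_natCast, smul_eq_mul]
    exact inv_mul_cancel_left₀ (by positivity) _
  rw [← hcm]
  exact centerMass_mem_convexHull _ (fun j _ => by positivity)
    (by rw [← Nat.cast_sum, hC i]; exact_mod_cast hd) fun j _ => Set.mem_range_self j

theorem affineIndependent_toR_of_det_ne_zero {n : ℕ} (Q : Fin (n + 1) → Fin n → ℤ)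
    (h : (Matrix.of fun i j => Q i.succ j - Q 0 j).det ≠ 0) :
    AffineIndependent ℝ fun i => toR (Q i) := by
  set M : Matrix (Fin n) (Fin n) ℤ := Matrix.of fun i j => Q i.succ j - Q 0 j
  have hM : (M.map (Int.cast : ℤ → ℝ)).det ≠ 0 := by
    rw [← Int.cast_det]
    exact_mod_cast h
  have hrows : (fun i : {x // x ≠ (0 : Fin (n + 1))} => toR (Q i) -ᵥ toR (Q 0)) ∘
      finSuccAboveEquiv 0 = fun i => M.map (Int.cast : ℤ → ℝ) i := by
    ext i j
    simp [M, toR, finSuccAboveEquiv_apply]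
  rw [affineIndependent_iff_linearIndependent_vsub ℝ _ 0,
    ← linearIndependent_equiv (finSuccAboveEquiv 0), hrows]
  exact Matrix.linearIndependent_rows_of_det_ne_zero hM

theorem lsimplex_eq_image_homothety {n m : ℕ} {W Q : Fin m → Fin n → ℤ} (v : Fin n → ℤ)
    (s : ℤ) (h : W = fun i => v + s • Q i) :
    lsimplex W = (fun y => toR v + (s : ℝ) • y) '' lsimplex Q := by
  let f : (Fin n → ℝ) →ᵃ[ℝ] (Fin n → ℝ) :=
    (s : ℝ) • AffineMap.id ℝ _ + AffineMap.const ℝ _ (toR v)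
  have hf : (fun y => toR v + (s : ℝ) • y) = f := by
    ext y x
    simp [f, add_comm]
  rw [lsimplex, lsimplex, hf, f.image_convexHull, ← Set.range_comp, h]
  congr 2
  ext i x
  simp [f, toR, add_comm]

/-- each `P̃_j` is contained in `P` and is a 3-dilation of a lattice simplex:
`P̃_j = v_j + 3·Q_j` for some `v_j ∈ ℤ⁴` and lattice simplex `Q_j`. -/
theorem example_extra_dilations_structure :
    ∀ W ∈ ({tP1, tP2, tP3} : Set (Fin 5 → Fin 4 → ℤ)),
      lsimplex W ⊆ lsimplex uEx ∧
      ∃ (v : Fin 4 → ℤ) (Q : Fin 5 → Fin 4 → ℤ),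
        AffineIndependent ℝ (fun i => toR (Q i)) ∧
        lsimplex W = (fun y => toR v + (3 : ℝ) • y) '' lsimplex Q := by
  rintro W (rfl | rfl | rfl)
  · refine ⟨lsimplex_subset_of_weights 20
      ![![8, 0, 12, 0, 0], ![0, 12, 3, 5, 0], ![0, 0, 0, 20, 0], ![5, 0, 0, 0, 15],
        ![20, 0, 0, 0, 0]] (by norm_num) (by decide) (by decide), ![2, 0, 0, 0],
      ![![0, 0, 0, 0], ![0, 14, 1, 0], ![2, 8, 4, 0], ![8, 6, 18, 15], ![1, 0, 0, 0]],
      affineIndependent_toR_of_det_ne_zero _ (by decide), ?_⟩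
    exact_mod_cast lsimplex_eq_image_homothety _ 3 (by decide)
  · refine ⟨lsimplex_subset_of_weights 20
      ![![8, 0, 12, 0, 0], ![8, 1, 11, 0, 0], ![0, 5, 0, 11, 4], ![1, 3, 1, 4, 11],
        ![20, 0, 0, 0, 0]] (by norm_num) (by decide) (by decide), ![2, 0, 0, 0],
      ![![0, 0, 0, 0], ![0, 1, 0, 0], ![3, 11, 7, 4], ![6, 9, 14, 11], ![1, 0, 0, 0]],
      affineIndependent_toR_of_det_ne_zero _ (by decide), ?_⟩
    exact_mod_cast lsimplex_eq_image_homothety _ 3 (by decide)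
  · refine ⟨lsimplex_subset_of_weights 20
      ![![8, 0, 12, 0, 0], ![8, 1, 11, 0, 0], ![0, 0, 0, 20, 0], ![0, 7, 3, 2, 8],
        ![20, 0, 0, 0, 0]] (by norm_num) (by decide) (by decide), ![2, 0, 0, 0],
      ![![0, 0, 0, 0], ![0, 1, 0, 0], ![2, 8, 4, 0], ![4, 11, 10, 8], ![1, 0, 0, 0]],
      affineIndependent_toR_of_det_ne_zero _ (by decide), ?_⟩
    exact_mod_cast lsimplex_eq_image_homothety _ 3 (by decide)
end
end
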